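/- Let f : [0,∞) → ℝ be increasing, strictly convex, with f(0) = 0, and satisfy f(3x) ≥ 2f(2x) for all real x ≥ 1. Let k ≥ 3 and s₁ ≥ 1 be natural numbers and let s₂ be a natural number with 2 ≤ s₂ ≤ s₁ − ⌈s₁/k⌉. Then f(s₁ + s₂ − ⌈(s₁ + s₂)/k⌉) ≥ f(s₁ − ⌈s₁/k⌉) + f(s₂). -/

import Mathlib

/-!
Put `x = s₂ / 2`, `A = s₁ - ⌈s₁/k⌉ ≥ 2x` and `T = s₁ + s₂ - ⌈(s₁ + s₂)/k⌉`. Subadditivity of the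
ceiling and `k ≥ 3` give `⌈(s₁ + s₂)/k⌉ - ⌈s₁/k⌉ ≤ ⌈s₂/3⌉ ≤ s₂/2`, so `T ≥ A + x`. By convexity
the increment of `f` over `[A, A + x]` dominates that over `[2x, 3x]`, which by the growth
condition is at least `f (2x) = f s₂`; monotonicity finishes.
-/

theorem ConvexOn.sub_le_sub_of_le {𝕜 : Type*} [Field 𝕜] [LinearOrder 𝕜] [IsStrictOrderedRing 𝕜]
    {s : Set 𝕜} {f : 𝕜 → 𝕜} (hf : ConvexOn 𝕜 s f) {a b t : 𝕜} (ha : a ∈ s) (hbt : b + t ∈ s)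
    (hab : a ≤ b) (ht : 0 ≤ t) : f (a + t) - f a ≤ f (b + t) - f b := by
  rcases (add_nonneg (sub_nonneg.2 hab) ht).eq_or_lt with hD | hD
  · obtain rfl : a = b := by linarith
    obtain rfl : t = 0 := by linarith
    exact le_rfl
  -- `a + t` and `b` are mirror-image convex combinations of the endpoints `a` and `b + t`.
  set μ := t / (b - a + t)
  have hμ : μ * (b - a + t) = t := div_mul_cancel₀ _ hD.ne'
  have hμ0 : 0 ≤ μ := div_nonneg ht hD.le
  have hμ1 : μ ≤ 1 := div_le_one_of_le₀ (by linarith) hD.le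
  have hleft := hf.2 ha hbt (sub_nonneg.2 hμ1) hμ0 (sub_add_cancel 1 μ)
  have hright := hf.2 ha hbt hμ0 (sub_nonneg.2 hμ1) (add_sub_cancel μ 1)
  simp only [smul_eq_mul] at hleft hright
  rw [show (1 - μ) * a + μ * (b + t) = a + t by linear_combination hμ] at hleft
  rw [show μ * a + (1 - μ) * (b + t) = b by linear_combination -hμ] at hright
  linarith

theorem two_mul_ceil_div_le {k s : ℕ} (hk : 3 ≤ k) (hs : 2 ≤ s) : 2 * ⌈(s : ℚ) / k⌉ ≤ s := by
  have hlt : (⌈(s : ℚ) / k⌉ : ℚ) < s / 3 + 1 :=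
    (Int.ceil_lt_add_one _).trans_le <| by
      gcongr
      exact_mod_cast hk
  have h3 : 3 * ⌈(s : ℚ) / k⌉ < s + 3 := by
    have : (3 * ⌈(s : ℚ) / k⌉ : ℚ) < s + 3 := by linarith
    exact_mod_cast this
  omega

theorem two_mul_ceil_add_div_sub_ceil_div_le {k s₁ s₂ : ℕ} (hk : 3 ≤ k) (hs₂ : 2 ≤ s₂) :
    2 * (⌈((s₁ : ℚ) + s₂) / k⌉ - ⌈(s₁ : ℚ) / k⌉) ≤ s₂ := by
  have hsub : ⌈((s₁ : ℚ) + s₂) / k⌉ ≤ ⌈(s₁ : ℚ) / k⌉ + ⌈(s₂ : ℚ) / k⌉ := by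
    rw [add_div]
    exact Int.ceil_add_le _ _
  have := two_mul_ceil_div_le hk hs₂
  omega

theorem add_map_two_mul_le_of_growth {f : ℝ → ℝ} (hmono : MonotoneOn f (Set.Ici 0))
    (hconv : ConvexOn ℝ (Set.Ici 0) f) (hgrow : ∀ x : ℝ, 1 ≤ x → 2 * f (2 * x) ≤ f (3 * x))
    {x A T : ℝ} (hx : 1 ≤ x) (hA : 2 * x ≤ A) (hT : A + x ≤ T) : f A + f (2 * x) ≤ f T := by
  have hincr : f (3 * x) - f (2 * x) ≤ f (A + x) - f A := by
    rw [show 3 * x = 2 * x + x by ring]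
    exact hconv.sub_le_sub_of_le (Set.mem_Ici.2 (by linarith)) (Set.mem_Ici.2 (by linarith)) hA
      (by linarith)
  have hmonoT : f (A + x) ≤ f T :=
    hmono (Set.mem_Ici.2 (by linarith)) (Set.mem_Ici.2 (by linarith)) hT
  linarith [hgrow x hx]

theorem case_two_inequality_general
    (f : ℝ → ℝ) (hmono : StrictMonoOn f (Set.Ici (0 : ℝ)))
    (hconv : StrictConvexOn ℝ (Set.Ici (0 : ℝ)) f)
    (hgrow : ∀ x : ℝ, 1 ≤ x → f (3 * x) ≥ 2 * f (2 * x))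
    (k s₁ s₂ : ℕ) (hk : 3 ≤ k)
    (hs₂low : 2 ≤ s₂) (hs₂high : (s₂ : ℤ) ≤ (s₁ : ℤ) - ⌈(s₁ : ℚ) / (k : ℚ)⌉) :
    f (((s₁ : ℝ) + s₂) - (⌈((s₁ : ℚ) + s₂) / (k : ℚ)⌉ : ℤ)) ≥
      f ((s₁ : ℝ) - (⌈(s₁ : ℚ) / (k : ℚ)⌉ : ℤ)) + f s₂ := by
  have hceil : ((2 * (⌈((s₁ : ℚ) + s₂) / k⌉ - ⌈(s₁ : ℚ) / k⌉) : ℤ) : ℝ) ≤ (s₂ : ℤ) := by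
    exact_mod_cast two_mul_ceil_add_div_sub_ceil_div_le hk hs₂low
  have hA : ((s₂ : ℤ) : ℝ) ≤ ((s₁ - ⌈(s₁ : ℚ) / k⌉ : ℤ) : ℝ) := by exact_mod_cast hs₂high
  have hs₂ : (2 : ℝ) ≤ s₂ := by exact_mod_cast hs₂low
  push_cast at hceil hA
  have key := add_map_two_mul_le_of_growth hmono.monotoneOn hconv.convexOn hgrow
    (x := s₂ / 2) (A := s₁ - ⌈(s₁ : ℚ) / k⌉) (T := s₁ + s₂ - ⌈((s₁ : ℚ) + s₂) / k⌉)
    (by linarith) (by linarith) (by linarith)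
  rwa [mul_div_cancel₀ _ two_ne_zero] at key

/-- Case II of the proof of the main proposition. -/
theorem case_two_inequality
    (f : ℝ → ℝ) (hmono : StrictMonoOn f (Set.Ici (0 : ℝ)))
    (hconv : StrictConvexOn ℝ (Set.Ici (0 : ℝ)) f)
    (hf0 : f 0 = 0)
    (hgrow : ∀ x : ℝ, 1 ≤ x → f (3 * x) ≥ 2 * f (2 * x))
    (k s₁ s₂ : ℕ) (hk : 3 ≤ k) (hs₁ : 1 ≤ s₁)
    (hs₂low : 2 ≤ s₂) (hs₂high : (s₂ : ℤ) ≤ (s₁ : ℤ) - ⌈(s₁ : ℚ) / (k : ℚ)⌉) :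
    f (((s₁ : ℝ) + s₂) - (⌈((s₁ : ℚ) + s₂) / (k : ℚ)⌉ : ℤ)) ≥
      f ((s₁ : ℝ) - (⌈(s₁ : ℚ) / (k : ℚ)⌉ : ℤ)) + f s₂ :=
  case_two_inequality_general f hmono hconv hgrow k s₁ s₂ hk hs₂low hs₂high
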